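/- Let X be a set with pairwise commuting maps φ₁,…,φ_d : X → X, let g : X → ℝ, let V ⊆ X, and let (n_k)_{k≥1} be a sequence of nonzero elements of ℕ^d with associated family of indices (S_i) and associated sequence (m_k). Define λ₁ = 1, λ_{k+1} = λ_k²/2^k, h₁ = g, and h_{k+1} = (h_k ∘ φ_{n_{k+1}+m_k}) · (g ∘ φ_{m_k}) · h_k / 2^k. Then λ_k = 2^{−(2^k − k − 1)} for every k ≥ 1; moreover, if g(y) ≥ 1 for every y ∈ V and x ∈ X satisfies φ_s(x) ∈ V for every s ∈ (S₀ ∪ ⋯ ∪ S_k) \ {m_k}, then h_k(x) ≥ λ_k ≥ 2^{−(2^k − 1)}. -/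
import Mathlib


open Filter Topology Set

/-- `phiIter φ n = φ₁^[n₁] ∘ ⋯ ∘ φ_d^[n_d]`. -/
def phiIter {X : Type*} {d : ℕ} (φ : Fin d → X → X) (n : Fin d → ℕ) : X → X :=
  (List.ofFn fun j : Fin d => (φ j)^[n j]).foldr (· ∘ ·) id

/-- `m₀ = 0`, `m_k = n_k + 2 m_{k-1}`. -/
def assocM {d : ℕ} (n : ℕ → Fin d → ℕ) : ℕ → Fin d → ℕ
  | 0 => 0
  | k + 1 => n (k + 1) + 2 • assocM n k

/-- `assocU n k = S₀ ∪ ⋯ ∪ S_k`, the cumulative union of the family of indices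
associated to `(n_k)`:  `S₀ = {0}`, `S_{k+1} = n_{k+1} + m_k + (S₀ ∪ ⋯ ∪ S_k)`. -/
def assocU {d : ℕ} (n : ℕ → Fin d → ℕ) : ℕ → Finset (Fin d → ℕ)
  | 0 => {0}
  | k + 1 => assocU n k ∪ (assocU n k).image fun j => n (k + 1) + assocM n k + j

lemma phiIter_zero {X : Type*} {d : ℕ} (φ : Fin d → X → X) : phiIter φ 0 = id := by
  induction d with
  | zero => rfl
  | succ d ih =>
    have : phiIter φ 0 = (φ 0)^[0] ∘ phiIter (fun j => φ j.succ) (fun _ => 0) := by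
      simp only [phiIter, List.ofFn_succ, List.foldr_cons]; rfl
    rw [this, show (fun _ : Fin d => 0) = (0 : Fin d → ℕ) from rfl, ih]; rfl

lemma phiIter_succ_eq {X : Type*} {d : ℕ} (φ : Fin (d+1) → X → X) (n : Fin (d+1) → ℕ) :
    phiIter φ n = (φ 0)^[n 0] ∘ phiIter (fun j => φ j.succ) (fun j => n j.succ) := by
  simp only [phiIter, List.ofFn_succ, List.foldr_cons]

lemma commute_phiIter {X : Type*} {d : ℕ} {f : X → X} {φ : Fin d → X → X}
    (hf : ∀ j, Function.Commute f (φ j)) (n : Fin d → ℕ) :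
    Function.Commute f (phiIter φ n) := by
  induction d with
  | zero => exact fun x => rfl
  | succ d ih =>
    rw [phiIter_succ_eq]
    exact ((hf 0).iterate_right (n 0)).comp_right (ih (fun j => hf j.succ) _)

lemma phiIter_add {X : Type*} {d : ℕ} {φ : Fin d → X → X}
    (hcomm : ∀ i j, Function.Commute (φ i) (φ j)) (a b : Fin d → ℕ) :
    phiIter φ (a + b) = phiIter φ a ∘ phiIter φ b := by
  induction d with
  | zero => rfl
  | succ d ih =>
    rw [phiIter_succ_eq, phiIter_succ_eq (n := a), phiIter_succ_eq (n := b)]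
    have hc : Function.Commute ((φ 0)^[b 0])
        (phiIter (fun j => φ j.succ) (fun j => a j.succ)) :=
      commute_phiIter (fun j => (hcomm 0 j.succ).iterate_left _) _
    have hadd : (fun j : Fin d => (a + b) j.succ) =
        (fun j => a j.succ) + (fun j => b j.succ) := rfl
    show (φ 0)^[(a + b) 0] ∘ _ = _
    have h0 : (a + b) 0 = a 0 + b 0 := rfl
    rw [h0, hadd, ih (fun i j => hcomm i.succ j.succ), Function.iterate_add]
    funext x
    simp only [Function.comp_apply]
    exact congrArg _ (hc _)

lemma assocU_le {d : ℕ} (n : ℕ → Fin d → ℕ) (k : ℕ) :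
    ∀ s ∈ assocU n k, ∀ j, s j ≤ assocM n k j := by
  induction k with
  | zero =>
    intro s hs j
    simp only [assocU, Finset.mem_singleton] at hs
    simp [hs, assocM]
  | succ k ih =>
    intro s hs j
    simp only [assocU, Finset.mem_union, Finset.mem_image] at hs
    rcases hs with hs | ⟨t, ht, rfl⟩
    · have := ih s hs j
      simp only [assocM, Pi.add_apply, Pi.smul_apply, smul_eq_mul]
      omega
    · have := ih t ht j
      simp only [assocM, Pi.add_apply, Pi.smul_apply, smul_eq_mul]
      omega

lemma assocM_mem {d : ℕ} (n : ℕ → Fin d → ℕ) (k : ℕ) : assocM n k ∈ assocU n k := by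
  induction k with
  | zero => simp [assocU, assocM]
  | succ k ih =>
    simp only [assocU, Finset.mem_union, Finset.mem_image]
    right
    exact ⟨assocM n k, ih, by funext j; simp [assocM, two_mul]; ring⟩

/-- The quantitative estimates in the proof of Lemma `rad`:
`λ_k = 2^{-(2^k - k - 1)}`, and if `g ≥ 1` on `V` and `φ_s(x) ∈ V` for every
`s ∈ (S₀∪⋯∪S_k)\{m_k}`, then `h_k(x) ≥ λ_k ≥ 2^{-(2^k - 1)}`. -/
theorem lambda_formula_and_lower_bound {X : Type*} {d : ℕ} (φ : Fin d → X → X)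
    (hcomm : ∀ i j, Function.Commute (φ i) (φ j)) (g : X → ℝ) (V : Set X)
    (n : ℕ → Fin d → ℕ) (hn : ∀ k, 1 ≤ k → n k ≠ 0)
    (lam : ℕ → ℝ) (hlam1 : lam 1 = 1)
    (hlam : ∀ k, 1 ≤ k → lam (k + 1) = lam k ^ 2 / 2 ^ k)
    (h : ℕ → X → ℝ) (hh1 : h 1 = g)
    (hh : ∀ k, 1 ≤ k → h (k + 1) = fun x =>
      h k (phiIter φ (n (k + 1) + assocM n k) x) * g (phiIter φ (assocM n k) x)
        * h k x / 2 ^ k) :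
    (∀ k, 1 ≤ k → lam k = (2 : ℝ) ^ (-((2 : ℤ) ^ k - k - 1))) ∧
    ∀ k, 1 ≤ k → (∀ y ∈ V, 1 ≤ g y) → ∀ x : X,
      (∀ s ∈ (assocU n k).erase (assocM n k), phiIter φ s x ∈ V) →
      lam k ≤ h k x ∧ (2 : ℝ) ^ (-((2 : ℤ) ^ k - 1)) ≤ lam k := by
  have hform : ∀ k, 1 ≤ k → lam k = (2 : ℝ) ^ (-((2 : ℤ) ^ k - k - 1)) := by
    intro k hk
    induction k, hk using Nat.le_induction with
    | base => rw [hlam1]; norm_num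
    | succ k hk ih =>
      rw [hlam k hk, ih, sq, ← zpow_add₀ (two_ne_zero), ← zpow_natCast (2 : ℝ) k,
        ← zpow_sub₀ (two_ne_zero)]
      congr 1
      push_cast
      ring
  have hpos : ∀ k, 1 ≤ k → 0 < lam k := by
    intro k hk; rw [hform k hk]; positivity
  have hlow : ∀ k, 1 ≤ k → (2 : ℝ) ^ (-((2 : ℤ) ^ k - 1)) ≤ lam k := by
    intro k hk
    rw [hform k hk]
    apply zpow_le_zpow_right₀ one_le_two
    have : (0 : ℤ) ≤ (k : ℤ) := Int.natCast_nonneg k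
    linarith
  have hbd : ∀ k, 1 ≤ k → (∀ y ∈ V, 1 ≤ g y) → ∀ x : X,
      (∀ s ∈ (assocU n k).erase (assocM n k), phiIter φ s x ∈ V) → lam k ≤ h k x := by
    intro k hk
    induction k, hk using Nat.le_induction with
    | base =>
      intro hg x hx
      have hM1 : assocM n 1 = n 1 := by funext j; simp [assocM]
      have h0 : (0 : Fin d → ℕ) ∈ (assocU n 1).erase (assocM n 1) := by
        rw [Finset.mem_erase, hM1]
        refine ⟨fun h0 => hn 1 le_rfl h0.symm, ?_⟩
        exact Finset.mem_union_left _ (by simp [assocU])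
      have := hx 0 h0
      rw [phiIter_zero] at this
      rw [hh1, hlam1]
      exact hg x this
    | succ k hk ih =>
      intro hg x hx
      have hMsucc : assocM n (k + 1) = n (k + 1) + assocM n k + assocM n k := by
        funext j; simp [assocM, two_mul]; ring
      obtain ⟨j₀, hj₀⟩ := Function.ne_iff.mp (hn (k + 1) (by omega))
      simp only [Pi.zero_apply] at hj₀
      have hsub : ∀ s ∈ (assocU n k).erase (assocM n k),
          s ∈ (assocU n (k + 1)).erase (assocM n (k + 1)) := by
        intro s hs
        rw [Finset.mem_erase] at hs ⊢
        obtain ⟨hne, hmem⟩ := hs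
        refine ⟨?_, Finset.mem_union_left _ hmem⟩
        intro heq
        have h1 := assocU_le n k s hmem j₀
        have h2 : s j₀ = n (k + 1) j₀ + (assocM n k j₀ + assocM n k j₀) := by
          rw [heq, hMsucc]; simp [add_assoc]
        omega
      have hshift : ∀ s ∈ (assocU n k).erase (assocM n k),
          n (k + 1) + assocM n k + s ∈ (assocU n (k + 1)).erase (assocM n (k + 1)) := by
        intro s hs
        rw [Finset.mem_erase] at hs ⊢
        obtain ⟨hne, hmem⟩ := hs
        constructor
        · intro heq
          rw [hMsucc] at heq
          exact hne (add_left_cancel heq)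
        · exact Finset.mem_union_right _ (Finset.mem_image.mpr ⟨s, hmem, rfl⟩)
      have hmk : assocM n k ∈ (assocU n (k + 1)).erase (assocM n (k + 1)) := by
        rw [Finset.mem_erase]
        refine ⟨?_, Finset.mem_union_left _ (assocM_mem n k)⟩
        intro heq
        have h2 : assocM n k j₀ = n (k + 1) j₀ + (assocM n k j₀ + assocM n k j₀) := by
          conv_lhs => rw [heq]
          rw [hMsucc]; simp [add_assoc]
        omega
      have hx1 : ∀ s ∈ (assocU n k).erase (assocM n k), phiIter φ s x ∈ V :=
        fun s hs => hx s (hsub s hs)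
      have hx2 : ∀ s ∈ (assocU n k).erase (assocM n k),
          phiIter φ s (phiIter φ (n (k + 1) + assocM n k) x) ∈ V := by
        intro s hs
        have heq : phiIter φ (n (k + 1) + assocM n k + s) x
            = phiIter φ s (phiIter φ (n (k + 1) + assocM n k) x) := by
          rw [add_comm (n (k + 1) + assocM n k) s, phiIter_add hcomm]; rfl
        rw [← heq]
        exact hx _ (hshift s hs)
      have hA := ih hg _ hx2
      have hC := ih hg x hx1
      have hB : 1 ≤ g (phiIter φ (assocM n k) x) := hg _ (hx _ hmk)
      have hp : 0 < lam k := hpos k hk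
      rw [hh k hk, hlam k hk]
      simp only
      gcongr ?_ / 2 ^ k
      have h1 : lam k * 1 ≤ h k (phiIter φ (n (k + 1) + assocM n k) x)
          * g (phiIter φ (assocM n k) x) :=
        mul_le_mul hA hB zero_le_one (hp.le.trans hA)
      have h2 : lam k * 1 * lam k ≤ h k (phiIter φ (n (k + 1) + assocM n k) x)
          * g (phiIter φ (assocM n k) x) * h k x :=
        mul_le_mul h1 hC hp.le
          (mul_nonneg (hp.le.trans hA) (zero_le_one.trans hB))
      calc lam k ^ 2 = lam k * 1 * lam k := by ring
        _ ≤ _ := h2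
  exact ⟨hform, fun k hk hg x hx => ⟨hbd k hk hg x hx, hlow k hk⟩⟩
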